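/- Let 0 < p < ∞ and Ω = (Ω_n)_n ⊂ [0,∞) with Ω_0 > 0. The functional ‖f‖_{d^∞(Ω,p)} = sup_n (Σ_{k=0}^n Ω_k)^{1/p} f*(n) is a norm on d^∞(Ω,p) if and only if Ω_n = 0 for all n ≥ 1. -/

import Mathlib

open MeasureTheory Set
open scoped ENNReal NNReal

/-- Nonincreasing rearrangement of a sequence (w.r.t. counting measure on ℕ). -/
noncomputable def rearrSeq (f : ℕ → ℝ) (n : ℕ) : ℝ≥0∞ :=
  sInf {s : ℝ≥0∞ | Measure.count {k : ℕ | s < ENNReal.ofReal |f k|} ≤ (n : ℝ≥0∞)}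

/-- The weak Lorentz sequence space functional `‖f‖_{d^∞(Ω,p)} = sup_n W_n^{1/p} f*(n)`. -/
noncomputable def wdNorm (Ω : ℕ → ℝ) (p : ℝ) (f : ℕ → ℝ) : ℝ≥0∞ :=
  ⨆ n : ℕ, ENNReal.ofReal ((∑ k ∈ Finset.range (n + 1), Ω k) ^ (1 / p)) * rearrSeq f n

/-!
If `W(n) = Ω₀` for all `n`, then `f*(n) ≤ f*(0) = sup_k |f k|` shows that the functional is
`Ω₀^{1/p}` times the sup norm. Otherwise let `m` be the first index with `W(0) < W(m)`, put
`a = W(0)^{1/p} < b = W(m)^{1/p}` and `t = a / b`. The sequences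
`f = (1, …, 1, t, 0, …)` (`m` ones) and `g = (t, 1, …, 1, 0, …)` (`m` ones) both have norm at most
`a`, because `b t = a`; but `f + g ≥ 1 + t` on `{0, …, m}`, so `‖f + g‖ ≥ b (1 + t) = b + a > 2a`.
-/

section Rearrangement

variable {f : ℕ → ℝ} {n : ℕ} {c : ℝ} {F : Finset ℕ}

theorem rearrSeq_le_ofReal (hF : F.card ≤ n) (h : ∀ k ∉ F, |f k| ≤ c) :
    rearrSeq f n ≤ ENNReal.ofReal c := by
  refine sInf_le ?_
  have hsub : {k : ℕ | ENNReal.ofReal c < ENNReal.ofReal |f k|} ⊆ F := fun k hk => by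
    by_contra hkF
    exact (ENNReal.ofReal_le_ofReal (h k hkF)).not_gt hk
  calc Measure.count {k : ℕ | ENNReal.ofReal c < ENNReal.ofReal |f k|}
      ≤ Measure.count (F : Set ℕ) := measure_mono hsub
    _ = F.card := Measure.count_apply_finset F
    _ ≤ n := by exact_mod_cast hF

theorem ofReal_le_rearrSeq (hF : n < F.card) (h : ∀ k ∈ F, c ≤ |f k|) :
    ENNReal.ofReal c ≤ rearrSeq f n := by
  refine le_sInf fun s hs => ?_
  by_contra! hs_lt
  have hsub : (F : Set ℕ) ⊆ {k : ℕ | s < ENNReal.ofReal |f k|} := fun k hk =>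
    hs_lt.trans_le (ENNReal.ofReal_le_ofReal (h k hk))
  have hcard : (F.card : ℝ≥0∞) ≤ n :=
    calc (F.card : ℝ≥0∞) = Measure.count (F : Set ℕ) := (Measure.count_apply_finset F).symm
      _ ≤ _ := measure_mono hsub
      _ ≤ n := hs
  exact hF.not_ge (by exact_mod_cast hcard)

theorem rearrSeq_antitone (f : ℕ → ℝ) : Antitone (rearrSeq f) := fun _ _ hmn =>
  sInf_le_sInf <| ofPred_subset_ofPred.2 fun _ hs => hs.trans (by exact_mod_cast hmn)

theorem rearrSeq_zero (f : ℕ → ℝ) : rearrSeq f 0 = ⨆ k, ‖f k‖ₑ := by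
  have hset : {s : ℝ≥0∞ | Measure.count {k : ℕ | s < ENNReal.ofReal |f k|} ≤ ((0 : ℕ) : ℝ≥0∞)}
      = Ici (⨆ k, ‖f k‖ₑ) := by
    ext s
    simp only [mem_ofPred_eq, Nat.cast_zero, nonpos_iff_eq_zero, Measure.count_eq_zero_iff,
      Set.eq_empty_iff_forall_notMem, not_lt, mem_Ici, iSup_le_iff, Real.enorm_eq_ofReal_abs]
  rw [rearrSeq, hset, csInf_Ici]

end Rearrangement

section SupNorm

variable {ι E : Type*} [NormedAddCommGroup E]

theorem iSup_enorm_eq_zero_iff {f : ι → E} : ⨆ k, ‖f k‖ₑ = 0 ↔ f = 0 := by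
  simp [ENNReal.iSup_eq_zero, funext_iff]

theorem iSup_enorm_smul {𝕜 : Type*} [NormedField 𝕜] [NormedSpace 𝕜 E] (c : 𝕜) (f : ι → E) :
    ⨆ k, ‖(c • f) k‖ₑ = ‖c‖ₑ * ⨆ k, ‖f k‖ₑ := by
  simp only [Pi.smul_apply, enorm_smul, ENNReal.mul_iSup]

theorem iSup_enorm_add_le (f g : ι → E) :
    ⨆ k, ‖(f + g) k‖ₑ ≤ (⨆ k, ‖f k‖ₑ) + ⨆ k, ‖g k‖ₑ :=
  iSup_le fun k => (enorm_add_le (f k) (g k)).trans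
    (add_le_add (le_iSup (fun k => ‖f k‖ₑ) k) (le_iSup (fun k => ‖g k‖ₑ) k))

end SupNorm

/-- The paper's `W(n)`. -/
def cumWeight (Ω : ℕ → ℝ) (n : ℕ) : ℝ := ∑ k ∈ Finset.range (n + 1), Ω k

theorem cumWeight_zero (Ω : ℕ → ℝ) : cumWeight Ω 0 = Ω 0 := by
  simp [cumWeight]

theorem cumWeight_eq_of_forall_eq_zero {Ω : ℕ → ℝ} (h : ∀ n, 1 ≤ n → Ω n = 0) (n : ℕ) :
    cumWeight Ω n = Ω 0 :=
  Finset.sum_eq_single_of_mem 0 (by simp) fun k _ hk => h k (Nat.one_le_iff_ne_zero.2 hk)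

theorem cumWeight_mono {Ω : ℕ → ℝ} (hΩ : ∀ n, 0 ≤ Ω n) : Monotone (cumWeight Ω) :=
  fun _ _ hmn => Finset.sum_le_sum_of_subset_of_nonneg
    (Finset.range_subset_range.2 (Nat.succ_le_succ hmn)) fun k _ _ => hΩ k

theorem cumWeight_zero_add_le {Ω : ℕ → ℝ} (hΩ : ∀ n, 0 ≤ Ω n) {n : ℕ} (hn : 1 ≤ n) :
    cumWeight Ω 0 + Ω n ≤ cumWeight Ω n := by
  obtain ⟨j, rfl⟩ := Nat.exists_eq_add_of_le' hn
  calc cumWeight Ω 0 + Ω (j + 1) ≤ cumWeight Ω j + Ω (j + 1) := by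
        gcongr; exact cumWeight_mono hΩ (Nat.zero_le j)
    _ = cumWeight Ω (j + 1) := (Finset.sum_range_succ Ω (j + 1)).symm

section WeakNorm

variable {Ω : ℕ → ℝ} {p : ℝ}

theorem wdNorm_eq_mul_iSup (h : ∀ n, 1 ≤ n → Ω n = 0) (f : ℕ → ℝ) :
    wdNorm Ω p f = ENNReal.ofReal (Ω 0 ^ (1 / p)) * ⨆ k, ‖f k‖ₑ := by
  have hW : ∀ n, ∑ k ∈ Finset.range (n + 1), Ω k = Ω 0 := cumWeight_eq_of_forall_eq_zero h
  rw [wdNorm, ← rearrSeq_zero]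
  simp only [hW]
  exact le_antisymm (iSup_le fun n => by gcongr; exact rearrSeq_antitone f (Nat.zero_le n))
    (le_iSup (fun n => ENNReal.ofReal (Ω 0 ^ (1 / p)) * rearrSeq f n) 0)

theorem ofReal_mul_le_wdNorm {f : ℕ → ℝ} {n : ℕ} {c : ℝ} {F : Finset ℕ} (hc : 0 ≤ c)
    (hF : n < F.card) (h : ∀ k ∈ F, c ≤ |f k|) :
    ENNReal.ofReal (cumWeight Ω n ^ (1 / p) * c) ≤ wdNorm Ω p f := by
  rw [ENNReal.ofReal_mul' hc]
  exact (mul_le_mul_right (ofReal_le_rearrSeq hF h) _).trans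
    (le_iSup (fun n => ENNReal.ofReal (cumWeight Ω n ^ (1 / p)) * rearrSeq f n) n)

theorem wdNorm_le_of_profile {f : ℕ → ℝ} {m : ℕ} {a t : ℝ} {F : Finset ℕ} (ht : 0 ≤ t)
    (hsmall : ∀ n < m, cumWeight Ω n ^ (1 / p) ≤ a) (hm : cumWeight Ω m ^ (1 / p) * t ≤ a)
    (hle_one : ∀ k, |f k| ≤ 1) (hF : F.card ≤ m) (hle_t : ∀ k ∉ F, |f k| ≤ t)
    (hsupp : ∀ k, m < k → f k = 0) :
    wdNorm Ω p f ≤ ENNReal.ofReal a := by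
  refine iSup_le fun n => ?_
  change ENNReal.ofReal (cumWeight Ω n ^ (1 / p)) * rearrSeq f n ≤ _
  rcases lt_trichotomy n m with hn | rfl | hn
  · calc _ ≤ ENNReal.ofReal (cumWeight Ω n ^ (1 / p)) * ENNReal.ofReal 1 :=
          mul_le_mul_right (rearrSeq_le_ofReal (F := ∅) (by simp) fun k _ => hle_one k) _
      _ ≤ _ := by rw [ENNReal.ofReal_one, mul_one]; exact ENNReal.ofReal_le_ofReal (hsmall n hn)
  · calc _ ≤ ENNReal.ofReal (cumWeight Ω n ^ (1 / p)) * ENNReal.ofReal t :=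
          mul_le_mul_right (rearrSeq_le_ofReal hF hle_t) _
      _ ≤ _ := by rw [← ENNReal.ofReal_mul' ht]; exact ENNReal.ofReal_le_ofReal hm
  · have hzero : rearrSeq f n = 0 := nonpos_iff_eq_zero.1 <| ENNReal.ofReal_zero ▸
      rearrSeq_le_ofReal (F := Finset.range (m + 1)) (by simpa using hn) fun k hk => by
        rw [hsupp k (by simpa using hk), abs_zero]
    simp [hzero]

theorem exists_wdNorm_add_gt (hp : 0 < p) {m : ℕ} (hW0 : 0 ≤ cumWeight Ω 0)
    (hsmall : ∀ n < m, cumWeight Ω n = cumWeight Ω 0) (hbig : cumWeight Ω 0 < cumWeight Ω m) :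
    ∃ f g : ℕ → ℝ, wdNorm Ω p f + wdNorm Ω p g < wdNorm Ω p (f + g) := by
  have hm : m ≠ 0 := by rintro rfl; exact hbig.false
  set a := cumWeight Ω 0 ^ (1 / p)
  set b := cumWeight Ω m ^ (1 / p)
  have ha : 0 ≤ a := Real.rpow_nonneg hW0 _
  have hab : a < b := Real.rpow_lt_rpow hW0 hbig (by positivity)
  set t := a / b
  have ht : 0 ≤ t := div_nonneg ha (ha.trans hab.le)
  have ht1 : t ≤ 1 := div_le_one_of_le₀ hab.le (ha.trans hab.le)
  have hbt : b * t = a := mul_div_cancel₀ _ (ha.trans_lt hab).ne'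
  have hsmall_pow : ∀ n < m, cumWeight Ω n ^ (1 / p) ≤ a := fun n hn => by rw [hsmall n hn]
  set f : ℕ → ℝ := fun k => if k < m then 1 else if k = m then t else 0
  set g : ℕ → ℝ := fun k => if k = 0 then t else if k ≤ m then 1 else 0
  have hf : wdNorm Ω p f ≤ ENNReal.ofReal a :=
    wdNorm_le_of_profile (F := Finset.range m) ht hsmall_pow hbt.le
      (fun k => by simp only [f]; split_ifs <;> simp [abs_of_nonneg ht, ht1])
      (by simp)
      (fun k hk => by
        simp only [Finset.mem_range] at hk; simp only [f]
        split_ifs <;> first | omega | simp [abs_of_nonneg ht, ht])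
      (fun k hk => by simp only [f]; rw [if_neg (by omega), if_neg (by omega)])
  have hg : wdNorm Ω p g ≤ ENNReal.ofReal a :=
    wdNorm_le_of_profile (F := Finset.Icc 1 m) ht hsmall_pow hbt.le
      (fun k => by simp only [g]; split_ifs <;> simp [abs_of_nonneg ht, ht1])
      (by simp)
      (fun k hk => by
        simp only [Finset.mem_Icc] at hk; simp only [g]
        split_ifs <;> first | omega | simp [abs_of_nonneg ht, ht])
      (fun k hk => by simp only [g]; rw [if_neg (by omega), if_neg (by omega)])
  have hfg : ENNReal.ofReal (b * (1 + t)) ≤ wdNorm Ω p (f + g) :=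
    ofReal_mul_le_wdNorm (F := Finset.range (m + 1)) (by positivity) (by simp)
      (fun k hk => by
        simp only [Finset.mem_range] at hk
        refine le_abs.2 (Or.inl ?_)
        simp only [Pi.add_apply, f, g]
        split_ifs <;> first | omega | linarith)
  refine ⟨f, g, ?_⟩
  calc wdNorm Ω p f + wdNorm Ω p g ≤ ENNReal.ofReal a + ENNReal.ofReal a := add_le_add hf hg
    _ = ENNReal.ofReal (2 * a) := by rw [← ENNReal.ofReal_add ha ha, two_mul]
    _ < ENNReal.ofReal (b * (1 + t)) :=
        (ENNReal.ofReal_lt_ofReal_iff (by nlinarith)).2 (by rw [mul_add, hbt]; linarith)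
    _ ≤ wdNorm Ω p (f + g) := hfg

end WeakNorm

/-- For `0 < p < ∞` and `Ω ⊆ [0,∞)` with `Ω₀ > 0`, the functional `‖·‖_{d^∞(Ω,p)}` is a
norm iff `Ωₙ = 0` for all `n ≥ 1`. -/
theorem stmt15 (p : ℝ) (hp : 0 < p) (Ω : ℕ → ℝ) (hΩ0 : 0 < Ω 0) (hΩ : ∀ n, 0 ≤ Ω n) :
    ((∀ f : ℕ → ℝ, wdNorm Ω p f = 0 → f = 0) ∧
     (∀ (f : ℕ → ℝ) (c : ℝ), wdNorm Ω p (c • f) = ENNReal.ofReal |c| * wdNorm Ω p f) ∧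
     (∀ f g : ℕ → ℝ, wdNorm Ω p (f + g) ≤ wdNorm Ω p f + wdNorm Ω p g)) ↔
    ∀ n : ℕ, 1 ≤ n → Ω n = 0 := by
  constructor
  · rintro ⟨-, -, htri⟩
    by_contra! hΩ1
    obtain ⟨n, hn, hΩn⟩ := hΩ1
    have hex : ∃ m, cumWeight Ω 0 < cumWeight Ω m :=
      ⟨n, by linarith [cumWeight_zero_add_le hΩ hn, (hΩ n).lt_of_ne' hΩn]⟩
    have hsmall : ∀ k < Nat.find hex, cumWeight Ω k = cumWeight Ω 0 := fun k hk =>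
      le_antisymm (not_lt.1 (Nat.find_min hex hk)) (cumWeight_mono hΩ k.zero_le)
    obtain ⟨f, g, hfg⟩ := exists_wdNorm_add_gt hp ((cumWeight_zero Ω).symm ▸ hΩ 0) hsmall
      (Nat.find_spec hex)
    exact (htri f g).not_gt hfg
  · intro h
    have hC : ENNReal.ofReal (Ω 0 ^ (1 / p)) ≠ 0 :=
      (ENNReal.ofReal_pos.2 (Real.rpow_pos_of_pos hΩ0 _)).ne'
    simp only [wdNorm_eq_mul_iSup h]
    refine ⟨fun f hf => ?_, fun f c => ?_, fun f g => ?_⟩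
    · exact iSup_enorm_eq_zero_iff.1 ((mul_eq_zero.1 hf).resolve_left hC)
    · rw [iSup_enorm_smul, ← Real.enorm_eq_ofReal_abs, mul_left_comm]
    · rw [← mul_add]
      exact mul_le_mul_right (iSup_enorm_add_le f g) _
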